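/- arXiv:0912.1999 — 2 statements merged into one kernel-verified Lean document; each statement's English description precedes it below -/
import Mathlib

section
/- Let μ be a positive real number and a, b positive integers with a > μb. The probability P that a random ordering of a votes for A and b votes for B satisfies a_r > μ·b_r for all r is at most (a - ⌊μ⌋b)/(a + b). -/
/-!
Strictly staying ahead of `μ · b_r` implies staying ahead of `k · b_r` for `k = ⌊μ⌋₊`, so it
suffices to show that the number `N(a, b)` of sequences with `a_r > k b_r` for all `r ≥ 1`
satisfies `(a + b) N(a, b) ≤ (a - k b) C(a + b, a)`. Splitting on the last vote gives
`N(a, b) ≤ N(a - 1, b) + N(a, b - 1)`, and the two Pascal identities turn the induction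
hypotheses into the claim, because `(a - 1 - k b) a + (a - k b + k) b = (a - k b)(a + b - 1)`.
The boundary case `a - 1 = k b` is harmless: a nonempty sequence ending with `a_r ≤ k b_r`
is not counted at all.
-/

/-- Number of A-votes (true) among the first `r` positions. -/
def countA (n : ℕ) (v : Fin n → Bool) (r : ℕ) : ℕ :=
  (Finset.univ.filter (fun i : Fin n => i.val < r ∧ v i = true)).card

/-- Number of B-votes (false) among the first `r` positions. -/
def countB (n : ℕ) (v : Fin n → Bool) (r : ℕ) : ℕ :=
  (Finset.univ.filter (fun i : Fin n => i.val < r ∧ v i = false)).card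

open Finset

section Counts

variable {n : ℕ}

lemma countB_eq_countA_not (v : Fin n → Bool) (r : ℕ) :
    countB n v r = countA n (fun i => !v i) r := by
  simp only [countA, countB, Bool.not_eq_true']

lemma countA_init {r : ℕ} (hr : r ≤ n) (v : Fin (n + 1) → Bool) :
    countA n (Fin.init v) r = countA (n + 1) v r := by
  simp only [countA, card_filter]
  rw [Fin.sum_univ_castSucc]
  simp only [Fin.val_last, not_lt.mpr hr, false_and, if_false, add_zero]
  rfl

lemma countB_init {r : ℕ} (hr : r ≤ n) (v : Fin (n + 1) → Bool) :
    countB n (Fin.init v) r = countB (n + 1) v r := by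
  rw [countB_eq_countA_not, countB_eq_countA_not, ← countA_init hr]
  rfl

lemma countA_self_eq_card (v : Fin n → Bool) :
    countA n v n = #{i | v i = true} := by
  simp only [countA, Fin.is_lt, true_and]

lemma countA_succ_self (v : Fin (n + 1) → Bool) :
    countA (n + 1) v (n + 1) = countA n (Fin.init v) n + (v (Fin.last n)).toNat := by
  rw [countA_self_eq_card, countA_self_eq_card, card_filter, card_filter,
    Fin.sum_univ_castSucc]
  cases v (Fin.last n) <;> rfl

lemma countA_add_countB_self (v : Fin n → Bool) : countA n v n + countB n v n = n := by
  rw [countA_self_eq_card, countB_eq_countA_not, countA_self_eq_card]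
  simpa only [Bool.not_eq_true, Bool.not_eq_true', card_univ, Fintype.card_fin] using
    card_filter_add_card_filter_not (s := univ) (fun i => v i = true)

lemma card_filter_countA_self (a : ℕ) :
    #{v : Fin n → Bool | countA n v n = a} = n.choose a := by
  simp only [countA_self_eq_card]
  refine (?_ : _ = #(powersetCard a (univ : Finset (Fin n)))).trans (by simp)
  refine card_nbij' (fun v => ({i | v i = true} : Finset (Fin n))) (fun s i => decide (i ∈ s))
    ?_ ?_ ?_ ?_
  · intro v hv
    simp_all [mem_powersetCard]
  · intro s hs
    simp_all [mem_powersetCard]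
  · intro v _
    funext i
    simp
  · intro s _
    ext i
    simp

end Counts

section Ahead

def IsAhead (k n : ℕ) (v : Fin n → Bool) : Prop :=
  ∀ r, 1 ≤ r → r ≤ n → k * countB n v r < countA n v r

lemma IsAhead.init {k n : ℕ} {v : Fin (n + 1) → Bool} (h : IsAhead k (n + 1) v) :
    IsAhead k n (Fin.init v) := by
  intro r hr₁ hr₂
  rw [countA_init hr₂, countB_init hr₂]
  exact h r hr₁ (hr₂.trans n.le_succ)

open Classical in
noncomputable def aheadSet (k n a : ℕ) : Finset (Fin n → Bool) :=
  {v | countA n v n = a ∧ IsAhead k n v}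

variable (k : ℕ)

lemma mem_aheadSet {n a : ℕ} {v : Fin n → Bool} :
    v ∈ aheadSet k n a ↔ countA n v n = a ∧ IsAhead k n v := by
  simp [aheadSet]

lemma aheadSet_succ_subset (n a : ℕ) :
    aheadSet k (n + 1) a ⊆
      (aheadSet k n (a - 1)).image (fun w => Fin.snoc w true) ∪
        (aheadSet k n a).image (fun w => Fin.snoc w false) := by
  intro v hv
  obtain ⟨hcount, hahead⟩ := (mem_aheadSet k).1 hv
  rw [countA_succ_self] at hcount
  have hinit : Fin.init v ∈ aheadSet k n (a - (v (Fin.last n)).toNat) :=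
    (mem_aheadSet k).2 ⟨by omega, hahead.init⟩
  rw [← Fin.snoc_init_self v]
  cases hlast : v (Fin.last n)
  · exact mem_union_right _ (mem_image_of_mem _ (by simpa [hlast] using hinit))
  · exact mem_union_left _ (mem_image_of_mem _ (by simpa [hlast] using hinit))

lemma card_aheadSet_succ_le (n a : ℕ) :
    #(aheadSet k (n + 1) a) ≤ #(aheadSet k n (a - 1)) + #(aheadSet k n a) :=
  (card_le_card (aheadSet_succ_subset k n a)).trans <|
    (card_union_le _ _).trans <| add_le_add card_image_le card_image_le

lemma card_aheadSet_le_choose (n a : ℕ) : #(aheadSet k n a) ≤ n.choose a := by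
  rw [← card_filter_countA_self]
  exact card_le_card fun v hv => mem_filter.2 ⟨mem_univ v, ((mem_aheadSet k).1 hv).1⟩

lemma aheadSet_eq_empty {n a b : ℕ} (hn : a + b = n) (hpos : 0 < n) (hab : a ≤ k * b) :
    aheadSet k n a = ∅ := by
  refine eq_empty_of_forall_notMem fun v hv => ?_
  obtain ⟨hcount, hahead⟩ := (mem_aheadSet k).1 hv
  have hB : countB n v n = b := by have := countA_add_countB_self v; omega
  have := hahead n hpos le_rfl
  rw [hB, hcount] at this
  omega

/-- With truncated subtraction this also covers `a ≤ k * b`, where the set is empty for `n > 0`. -/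
theorem mul_card_aheadSet_le {n a b : ℕ} (hn : a + b = n) :
    n * #(aheadSet k n a) ≤ (a - k * b) * n.choose a := by
  induction n generalizing a b with
  | zero => simp
  | succ n ih =>
    by_cases hab : a ≤ k * b
    · simp [aheadSet_eq_empty k hn n.succ_pos hab]
    rcases b with _ | b
    · obtain rfl : a = n + 1 := hn
      rw [mul_zero, Nat.sub_zero, Nat.choose_self]
      exact Nat.mul_le_mul_left _ ((card_aheadSet_le_choose k _ _).trans_eq (Nat.choose_self _))
    obtain ⟨d, rfl⟩ : ∃ d, a = k * (b + 1) + d + 1 := ⟨a - k * (b + 1) - 1, by omega⟩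
    set a := k * (b + 1) + d + 1 with ha
    have hn' : n = a + b := by omega
    have hprev_true : n * #(aheadSet k n (a - 1)) ≤ d * n.choose (a - 1) := by
      simpa [ha] using ih (a := a - 1) (b := b + 1) (by omega)
    have hprev_false : n * #(aheadSet k n a) ≤ (d + k + 1) * n.choose a := by
      have := ih (a := a) (b := b) hn'.symm
      rwa [show a - k * b = d + k + 1 by rw [ha, Nat.mul_succ]; omega] at this
    have hpascal_true : (n + 1) * n.choose (a - 1) = a * (n + 1).choose a := by
      rw [Nat.add_one_mul_choose_eq, Nat.sub_add_cancel (by omega), mul_comm]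
    have hpascal_false : (n + 1) * n.choose a = (b + 1) * (n + 1).choose a := by
      rw [mul_comm, Nat.choose_mul_succ_eq, show n + 1 - a = b + 1 by omega, mul_comm]
    refine Nat.le_of_mul_le_mul_left ?_ (show 0 < n by omega)
    calc n * ((n + 1) * #(aheadSet k (n + 1) a))
        ≤ (n + 1) * (n * #(aheadSet k n (a - 1)) + n * #(aheadSet k n a)) := by
          rw [← mul_add, mul_left_comm]
          exact Nat.mul_le_mul_left _ (Nat.mul_le_mul_left _ (card_aheadSet_succ_le k n a))
      _ ≤ (n + 1) * (d * n.choose (a - 1) + (d + k + 1) * n.choose a) := by gcongr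
      _ = d * ((n + 1) * n.choose (a - 1)) + (d + k + 1) * ((n + 1) * n.choose a) := by ring
      _ = (d * a + (d + k + 1) * (b + 1)) * (n + 1).choose a := by
          rw [hpascal_true, hpascal_false]; ring
      _ = n * ((a - k * (b + 1)) * (n + 1).choose a) := by
          rw [show a - k * (b + 1) = d + 1 by omega, hn', ha]; ring

end Ahead

lemma isAhead_of_natCast_le {μ : ℝ} {k n : ℕ} {v : Fin n → Bool} (hk : (k : ℝ) ≤ μ)
    (h : ∀ r, 1 ≤ r → r ≤ n → μ * (countB n v r : ℝ) < (countA n v r : ℝ)) :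
    IsAhead k n v := fun r hr₁ hr₂ => by
  exact_mod_cast (mul_le_mul_of_nonneg_right hk (Nat.cast_nonneg _)).trans_lt (h r hr₁ hr₂)

open Classical in
theorem ballot_strict_upper_bound_general (μ : ℝ) (a b : ℕ) (hμ : 0 < μ)
    (hab : μ * b < a) :
    (((Finset.univ.filter (fun v : Fin (a + b) → Bool =>
        countA (a + b) v (a + b) = a ∧
        ∀ r, 1 ≤ r → r ≤ a + b →
          μ * (countB (a + b) v r : ℝ) < (countA (a + b) v r : ℝ))).card : ℝ) /
      ((Finset.univ.filter (fun v : Fin (a + b) → Bool =>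
        countA (a + b) v (a + b) = a)).card : ℝ))
      ≤ ((a : ℝ) - (⌊μ⌋ : ℝ) * b) / ((a : ℝ) + b) := by
  set k := ⌊μ⌋₊
  have hkμ : (k : ℝ) ≤ μ := Nat.floor_le hμ.le
  have hkb : k * b < a := by
    exact_mod_cast (mul_le_mul_of_nonneg_right hkμ b.cast_nonneg).trans_lt hab
  have hbound := Nat.cast_le (α := ℝ).2 (mul_card_aheadSet_le k (rfl : a + b = a + b))
  push_cast [Nat.cast_sub hkb.le] at hbound
  rw [card_filter_countA_self, ← natCast_floor_eq_intCast_floor hμ.le,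
    div_le_div_iff₀ (Nat.cast_pos.2 (Nat.choose_pos (by omega))) (by norm_cast; omega)]
  refine le_trans ?_ ((mul_comm _ _).trans_le hbound)
  refine mul_le_mul_of_nonneg_right (Nat.cast_le.2 <| card_le_card fun v hv => ?_) (by positivity)
  simp only [mem_filter, mem_univ, true_and] at hv
  obtain ⟨hcount, hreal⟩ := hv
  exact (mem_aheadSet k).2 ⟨hcount, isAhead_of_natCast_le hkμ hreal⟩

open Classical in
theorem ballot_strict_upper_bound (μ : ℝ) (a b : ℕ) (hμ : 0 < μ) (ha : 0 < a) (hb : 0 < b)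
    (hab : μ * b < a) :
    (((Finset.univ.filter (fun v : Fin (a + b) → Bool =>
        countA (a + b) v (a + b) = a ∧
        ∀ r, 1 ≤ r → r ≤ a + b →
          μ * (countB (a + b) v r : ℝ) < (countA (a + b) v r : ℝ))).card : ℝ) /
      ((Finset.univ.filter (fun v : Fin (a + b) → Bool =>
        countA (a + b) v (a + b) = a)).card : ℝ))
      ≤ ((a : ℝ) - (⌊μ⌋ : ℝ) * b) / ((a : ℝ) + b) :=
  ballot_strict_upper_bound_general μ a b hμ hab
end

section
/- Let μ > 0 be real and suppose a sequence of a+b votes satisfies S'_r ≥ 0 for all r (where S'_r = a_r - μ·b_r). If r is an index such that S'_r ≤ S'_t for all t with r+1 ≤ t ≤ a+b, then the cyclic permutation of the sequence beginning with the (r+1)-th term also has all weighted partial sums nonnegative. -/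
/-- Cyclic permutation moving the first `i` votes to the end. -/
def cyc {n : ℕ} (v : Fin n → Bool) (i : ℕ) : Fin n → Bool :=
  fun j => v ⟨(j.val + i) % n, Nat.mod_lt _ (Nat.lt_of_le_of_lt (Nat.zero_le j.val) j.isLt)⟩

/-!
Weight each A-vote by `1` and each B-vote by `-μ`, and extend the weights `n`-periodically
(`n = a + b`). Then `S'_t` is the `t`-th prefix sum `P t`, and the shifted sequence has partial
sums `P (r + j) - P r`. If `r + j ≤ n` this is nonnegative by minimality of `S'_r` on `[r, n]`;
otherwise periodicity gives `P (r + j) = P n + P (r + j - n)`, and `P n ≥ P r`, `P (r + j - n) ≥ 0`.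
-/

open Finset Function Fin.NatCast

section PeriodicPrefixSums

variable {M : Type*} [AddCommGroup M] {f : ℕ → M} {n : ℕ}

theorem Function.Periodic.sum_range_period_add (hf : Periodic f n) (s : ℕ) :
    ∑ k ∈ range (n + s), f k = ∑ k ∈ range n, f k + ∑ k ∈ range s, f k := by
  rw [Finset.sum_range_add]
  congr 1
  exact sum_congr rfl fun k _ => by rw [add_comm, hf k]

theorem sum_range_shift_nonneg_of_le_prefix_sums [LinearOrder M] [IsOrderedAddMonoid M]
    (hf : Periodic f n) {r : ℕ} (hr : r ≤ n)
    (hprefix : ∀ t ≤ n, 0 ≤ ∑ k ∈ range t, f k)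
    (hmin : ∀ t, r < t → t ≤ n → ∑ k ∈ range r, f k ≤ ∑ k ∈ range t, f k)
    {j : ℕ} (hj : j ≤ n) :
    0 ≤ ∑ k ∈ range j, f (r + k) := by
  rw [eq_sub_of_add_eq' (Finset.sum_range_add f r j).symm, sub_nonneg]
  rcases le_or_gt (r + j) n with hle | hgt
  · rcases j.eq_zero_or_pos with rfl | hj0
    · rfl
    · exact hmin _ (by omega) hle
  · obtain ⟨s, hs⟩ : ∃ s, r + j = n + s := ⟨r + j - n, by omega⟩
    have hrn : ∑ k ∈ range r, f k ≤ ∑ k ∈ range n, f k := by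
      rcases hr.eq_or_lt with rfl | hlt
      · rfl
      · exact hmin n hlt le_rfl
    rw [hs, hf.sum_range_period_add]
    exact le_add_of_le_of_nonneg hrn (hprefix s (by omega))

end PeriodicPrefixSums

def voteWeight (μ : ℝ) (x : Bool) : ℝ := if x then 1 else -μ

theorem countA_sub_mul_countB_eq_sum_filter {n : ℕ} (μ : ℝ) (v : Fin n → Bool) (t : ℕ) :
    (countA n v t : ℝ) - μ * countB n v t = ∑ i with i.val < t, voteWeight μ (v i) := by
  simp only [voteWeight, sum_ite, filter_filter, sum_const, countA, countB]
  simp [sub_eq_add_neg, mul_comm]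

theorem countA_sub_mul_countB_eq_sum_range {n : ℕ} [NeZero n] (μ : ℝ) (v : Fin n → Bool) {t : ℕ}
    (ht : t ≤ n) :
    (countA n v t : ℝ) - μ * countB n v t = ∑ k ∈ range t, voteWeight μ (v k) := by
  have hrange : range t = {k ∈ range n | k < t} := by
    ext k; simp only [mem_range, mem_filter]; omega
  rw [countA_sub_mul_countB_eq_sum_filter, sum_filter, hrange, sum_filter,
    ← Fin.sum_univ_eq_sum_range (fun k => if k < t then voteWeight μ (v k) else 0)]
  simp only [Fin.cast_val_eq_self]

theorem cyc_natCast {n : ℕ} [NeZero n] (v : Fin n → Bool) (r k : ℕ) :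
    cyc v r k = v ((r + k : ℕ) : Fin n) := by
  simp only [cyc]
  congr 1
  ext
  simp only [Fin.val_natCast]
  rw [add_comm, Nat.add_mod_mod]

theorem shift_at_cute_index_is_cute_general (μ : ℝ) (a b : ℕ)
    (v : Fin (a + b) → Bool)
    (hcute : ∀ r, r ≤ a + b →
      0 ≤ (countA (a + b) v r : ℝ) - μ * (countB (a + b) v r : ℝ))
    (r : ℕ) (hr : r ≤ a + b)
    (hmin : ∀ t, r + 1 ≤ t → t ≤ a + b →
      (countA (a + b) v r : ℝ) - μ * (countB (a + b) v r : ℝ) ≤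
        (countA (a + b) v t : ℝ) - μ * (countB (a + b) v t : ℝ)) :
    ∀ j, j ≤ a + b →
      0 ≤ (countA (a + b) (cyc v r) j : ℝ) - μ * (countB (a + b) (cyc v r) j : ℝ) := by
  intro j hj
  rcases Nat.eq_zero_or_pos (a + b) with hn | hn
  · obtain rfl : j = 0 := by omega
    simp [countA, countB]
  have : NeZero (a + b) := ⟨hn.ne'⟩
  have hperiodic : Periodic (fun k : ℕ => voteWeight μ (v k)) (a + b) := fun k => by simp
  rw [countA_sub_mul_countB_eq_sum_range μ _ hj]
  simp only [cyc_natCast]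
  refine sum_range_shift_nonneg_of_le_prefix_sums hperiodic hr (fun t ht => ?_)
    (fun t hrt ht => ?_) hj
  · rw [← countA_sub_mul_countB_eq_sum_range μ v ht]
    exact hcute t ht
  · rw [← countA_sub_mul_countB_eq_sum_range μ v hr, ← countA_sub_mul_countB_eq_sum_range μ v ht]
    exact hmin t hrt ht

theorem shift_at_cute_index_is_cute (μ : ℝ) (a b : ℕ) (hμ : 0 < μ)
    (v : Fin (a + b) → Bool) (hA : countA (a + b) v (a + b) = a)
    (hB : countB (a + b) v (a + b) = b)
    (hcute : ∀ r, r ≤ a + b →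
      0 ≤ (countA (a + b) v r : ℝ) - μ * (countB (a + b) v r : ℝ))
    (r : ℕ) (hr : r ≤ a + b)
    (hmin : ∀ t, r + 1 ≤ t → t ≤ a + b →
      (countA (a + b) v r : ℝ) - μ * (countB (a + b) v r : ℝ) ≤
        (countA (a + b) v t : ℝ) - μ * (countB (a + b) v t : ℝ)) :
    ∀ j, j ≤ a + b →
      0 ≤ (countA (a + b) (cyc v r) j : ℝ) - μ * (countB (a + b) (cyc v r) j : ℝ) :=
  shift_at_cute_index_is_cute_general μ a b v hcute r hr hmin
end
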